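/- For all natural a, b ≥ 1 and k ≥ 3: g_k(3ab) ≥ g_3(a)·g_k(b), where g_k(n) is the maximum size of a k-AP-free subset of {1,...,n}. (Construction: split [1,3ab] into a blocks of length 3b, select blocks indexed by a maximal 3-AP-free subset of [1,a], take the middle third of length b in each selected block, and place a maximal k-AP-free subset of [1,b] in each middle third; the union is k-AP-free.) -/

import Mathlib

/-- A finite set of integers contains no nontrivial `k`-term arithmetic progression. -/
def KAPFree (k : ℕ) (S : Finset ℤ) : Prop :=
  ∀ x d : ℤ, d ≠ 0 → ¬ (∀ i ∈ Finset.range k, x + (i : ℤ) * d ∈ S)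

/-- `gk k n` : maximum size of a subset of `{1,…,n}` with no nontrivial `k`-AP. -/
noncomputable def gk (k n : ℕ) : ℕ :=
  sSup {m | ∃ S ⊆ Finset.Icc (1 : ℤ) n, KAPFree k S ∧ S.card = m}

/-!
Write the integers as `m * (p - 1) + q` with a block index `p` and an offset `q ∈ [1, b]`,
where `2 * b ≤ m`. Along an arithmetic progression the second differences vanish; those of the
offsets are smaller than `m` in absolute value, so the block indices and the offsets of the
terms are arithmetic progressions themselves. Hence a `k`-AP in the union of the blocks indexed
by `A`, each filled with a copy of `B`, is either a nontrivial `k`-AP of block indices in `A`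
(which contains a 3-AP) or lies in a single block and is a `k`-AP in `B`.
-/

open Finset

lemma KAPFree.mono {j k : ℕ} {S : Finset ℤ} (hS : KAPFree j S) (hjk : j ≤ k) : KAPFree k S :=
  fun x d hd hall ↦ hS x d hd fun i hi ↦
    hall i (mem_range.2 ((mem_range.1 hi).trans_le hjk))

lemma gk_bddAbove (k n : ℕ) :
    BddAbove {m | ∃ S ⊆ Icc (1 : ℤ) n, KAPFree k S ∧ S.card = m} := by
  refine ⟨#(Icc (1 : ℤ) n), ?_⟩
  rintro m ⟨S, hS, -, rfl⟩
  exact card_le_card hS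

lemma card_le_gk {k n : ℕ} {S : Finset ℤ} (hS : S ⊆ Icc (1 : ℤ) n) (hfree : KAPFree k S) :
    #S ≤ gk k n :=
  le_csSup (gk_bddAbove k n) ⟨S, hS, hfree, rfl⟩

lemma exists_card_eq_gk {k : ℕ} (hk : 0 < k) (n : ℕ) :
    ∃ S ⊆ Icc (1 : ℤ) n, KAPFree k S ∧ #S = gk k n := by
  have hempty : KAPFree k ∅ := fun x d _ hall ↦ by
    simpa using hall 0 (mem_range.2 hk)
  exact Nat.sSup_mem (s := {m | ∃ S ⊆ Icc (1 : ℤ) n, KAPFree k S ∧ #S = m})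
    ⟨0, ∅, empty_subset _, hempty, card_empty⟩ (gk_bddAbove k n)

lemma eq_zero_of_mul_add_eq_zero {m u v : ℤ} (hv : |v| < m) (h : m * u + v = 0) :
    u = 0 ∧ v = 0 := by
  have hv0 : v = 0 := Int.eq_zero_of_abs_lt_dvd ⟨-u, by linarith⟩ hv
  subst hv0
  exact ⟨(mul_eq_zero.1 (by simpa using h)).resolve_left (by simp at hv; omega), rfl⟩

lemma eq_add_mul_of_second_diff_eq_zero {R : Type*} [CommRing R] {u : ℕ → R} {k : ℕ}
    (h : ∀ i, i + 2 < k → u i - 2 * u (i + 1) + u (i + 2) = 0) :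
    ∀ i < k, u i = u 0 + i * (u 1 - u 0) := by
  intro i
  induction i using Nat.twoStepInduction with
  | zero => intro; simp
  | one => intro; simp
  | more n ih₀ ih₁ =>
    intro hn
    have h₀ := ih₀ (by omega)
    have h₁ := ih₁ (by omega)
    push_cast at h₁ ⊢
    linear_combination h n hn + 2 * h₁ - h₀

def blockSet (m : ℤ) (A B : Finset ℤ) : Finset ℤ :=
  (A ×ˢ B).image fun pq ↦ m * (pq.1 - 1) + pq.2

section blockSet

variable {m a b : ℤ} {A B : Finset ℤ}

lemma blockSet_subset_Icc (hm : 0 ≤ m) (hA : A ⊆ Icc 1 a) (hB : B ⊆ Icc 1 b) :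
    blockSet m A B ⊆ Icc 1 (m * (a - 1) + b) := by
  simp only [blockSet, image_subset_iff, mem_product, and_imp, Prod.forall, mem_Icc]
  intro p q hp hq
  obtain ⟨hp₁, hpa⟩ := mem_Icc.1 (hA hp)
  obtain ⟨hq₁, hqb⟩ := mem_Icc.1 (hB hq)
  constructor <;> nlinarith

lemma card_blockSet (hB : B ⊆ Icc 1 b) (hbm : b ≤ m) : #(blockSet m A B) = #A * #B := by
  rw [blockSet, card_image_of_injOn, card_product]
  rintro ⟨p, q⟩ hpq ⟨p', q'⟩ hpq' heq
  simp only [coe_product, Set.mem_prod, mem_coe] at hpq hpq' heq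
  obtain ⟨hq₁, hqb⟩ := mem_Icc.1 (hB hpq.2)
  obtain ⟨hq₁', hqb'⟩ := mem_Icc.1 (hB hpq'.2)
  obtain ⟨hp, hq⟩ := eq_zero_of_mul_add_eq_zero (m := m) (u := p - p') (v := q - q')
    (abs_lt.2 ⟨by linarith, by linarith⟩) (by linear_combination heq)
  rw [sub_eq_zero.1 hp, sub_eq_zero.1 hq]

lemma kapFree_blockSet {k : ℕ} (hk : 3 ≤ k) (hA : KAPFree 3 A) (hBk : KAPFree k B)
    (hB : B ⊆ Icc 1 b) (hbm : 2 * b ≤ m) : KAPFree k (blockSet m A B) := by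
  intro x d hd hall
  have hdecomp : ∀ i ∈ range k, ∃ p ∈ A, ∃ q ∈ B, m * (p - 1) + q = x + i * d := by
    intro i hi
    obtain ⟨⟨p, q⟩, hpq, heq⟩ := mem_image.1 (hall i hi)
    exact ⟨p, (mem_product.1 hpq).1, q, (mem_product.1 hpq).2, heq⟩
  choose! P hP Q hQ hPQ using hdecomp
  have hQb : ∀ i, i < k → 1 ≤ Q i ∧ Q i ≤ b := fun i hi ↦ mem_Icc.1 (hB (hQ i (mem_range.2 hi)))
  have hsecond : ∀ i, i + 2 < k →
      P i - 2 * P (i + 1) + P (i + 2) = 0 ∧ Q i - 2 * Q (i + 1) + Q (i + 2) = 0 := by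
    intro i hi
    have h₀ := hPQ i (mem_range.2 (by omega))
    have h₁ := hPQ (i + 1) (mem_range.2 (by omega))
    have h₂ := hPQ (i + 2) (mem_range.2 hi)
    obtain ⟨hq₀, hq₀'⟩ := hQb i (by omega)
    obtain ⟨hq₁, hq₁'⟩ := hQb (i + 1) (by omega)
    obtain ⟨hq₂, hq₂'⟩ := hQb (i + 2) hi
    push_cast at h₁ h₂
    exact eq_zero_of_mul_add_eq_zero (m := m) (u := P i - 2 * P (i + 1) + P (i + 2))
      (abs_lt.2 ⟨by linarith, by linarith⟩) (by linear_combination h₀ - 2 * h₁ + h₂)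
  have hPap := eq_add_mul_of_second_diff_eq_zero fun i hi ↦ (hsecond i hi).1
  have hQap := eq_add_mul_of_second_diff_eq_zero fun i hi ↦ (hsecond i hi).2
  have hdiff : m * (P 1 - P 0) + (Q 1 - Q 0) = d := by
    have h₀ := hPQ 0 (mem_range.2 (by omega))
    have h₁ := hPQ 1 (mem_range.2 (by omega))
    push_cast at h₀ h₁
    linear_combination h₁ - h₀
  by_cases hP₀ : P 1 - P 0 = 0
  · refine hBk (Q 0) d hd fun i hi ↦ ?_
    rw [← show Q 1 - Q 0 = d by simpa [hP₀] using hdiff, ← hQap i (mem_range.1 hi)]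
    exact hQ i hi
  · refine hA.mono hk (P 0) _ hP₀ fun i hi ↦ ?_
    rw [← hPap i (mem_range.1 hi)]
    exact hP i hi

end blockSet

theorem gk_supermultiplicative_general (a b k : ℕ) (hk : 3 ≤ k) :
    gk 3 a * gk k b ≤ gk k (3 * a * b) := by
  obtain ⟨A, hA, hAfree, hAcard⟩ := exists_card_eq_gk (k := 3) (by norm_num) a
  obtain ⟨B, hB, hBfree, hBcard⟩ := exists_card_eq_gk (k := k) (by omega) b
  have hb : (0 : ℤ) ≤ b := b.cast_nonneg
  have hrange : Icc (1 : ℤ) (3 * b * (a - 1) + b) ⊆ Icc 1 ((3 * a * b : ℕ) : ℤ) :=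
    Icc_subset_Icc le_rfl (by push_cast; nlinarith)
  calc gk 3 a * gk k b = #(blockSet (3 * b) A B) := by
        rw [card_blockSet hB (by linarith), hAcard, hBcard]
    _ ≤ gk k (3 * a * b) :=
        card_le_gk ((blockSet_subset_Icc (by positivity) hA hB).trans hrange)
          (kapFree_blockSet hk hAfree hBfree hB (by linarith))

theorem gk_supermultiplicative (a b k : ℕ) (ha : 1 ≤ a) (hb : 1 ≤ b) (hk : 3 ≤ k) :
    gk 3 a * gk k b ≤ gk k (3 * a * b) :=
  gk_supermultiplicative_general a b k hk
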